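/- Let A, B ∈ ℝ^{d×n}, let P be the random projection operator P(A) = Σ_{(i,u)∈S} u uᵀ A eᵢ eᵢᵀ built from a random set S with per-index orthonormal directions, and let ω be a {0,1}-valued random variable such that E[ω P(A)] = σ A for all A, where σ ∈ (0,1). Then E[‖A − ω P(A − B)‖_F²] = (1 − σ)‖A‖_F² + σ‖B‖_F². -/

import Mathlib

open Finset MeasureTheory

variable {d n : ℕ}

/-- The projection operator `P(A) = Σ_{(i,u)∈S} u uᵀ A eᵢ eᵢᵀ`. -/
def Pop (S : Finset (Fin n × (Fin d → ℝ)))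
    (A : Matrix (Fin d) (Fin n) ℝ) : Matrix (Fin d) (Fin n) ℝ :=
  ∑ p ∈ S, Matrix.of fun j i => if i = p.1 then p.2 j * ∑ l, p.2 l * A l p.1 else 0

/-- For each fixed index `i`, the directions paired with `i` in `S` are orthonormal. -/
def PerIndexOrthonormal (S : Finset (Fin n × (Fin d → ℝ))) : Prop :=
  (∀ p ∈ S, ∑ l, p.2 l * p.2 l = 1) ∧
    ∀ p ∈ S, ∀ q ∈ S, p.1 = q.1 → p.2 ≠ q.2 → ∑ l, p.2 l * q.2 l = 0

/-- Squared Frobenius norm. -/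
def frobSq (A : Matrix (Fin d) (Fin n) ℝ) : ℝ := ∑ j, ∑ i, A j i ^ 2

/-! Write `X = A - B`. Each column of `P(X)` is the orthogonal projection of the corresponding
column of `X` onto an orthonormal family, so `‖P(X)‖² = ⟨P(X), X⟩`; together with `ω² = ω` this makes
`‖A - ω P(X)‖² = ‖A‖² + ω ⟨P(X), X - 2A⟩` affine in `ω P(X)`. Taking expectations replaces
`ω P(X)` by `σ X`, and `⟨X, X - 2A⟩ = ‖B‖² - ‖A‖²`. -/

open scoped Matrix

def frobInner (M N : Matrix (Fin d) (Fin n) ℝ) : ℝ := ∑ j, ∑ i, M j i * N j i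

lemma frobInner_self (M : Matrix (Fin d) (Fin n) ℝ) : frobInner M M = frobSq M := by
  simp only [frobInner, frobSq, sq]

lemma frobInner_eq_sum_dotProduct_transpose (M N : Matrix (Fin d) (Fin n) ℝ) :
    frobInner M N = ∑ i, Mᵀ i ⬝ᵥ Nᵀ i := by
  rw [frobInner, Finset.sum_comm]
  rfl

lemma dotProduct_self_eq_of_orthonormal {ι m : Type*} [Fintype m] [DecidableEq ι]
    (T : Finset ι) (u : ι → m → ℝ)
    (hu : ∀ p ∈ T, ∀ q ∈ T, u p ⬝ᵥ u q = if p = q then 1 else 0) (x : m → ℝ) :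
    (∑ p ∈ T, (u p ⬝ᵥ x) • u p) ⬝ᵥ (∑ p ∈ T, (u p ⬝ᵥ x) • u p) =
      (∑ p ∈ T, (u p ⬝ᵥ x) • u p) ⬝ᵥ x := by
  have hcoeff : ∀ p ∈ T, u p ⬝ᵥ ∑ q ∈ T, (u q ⬝ᵥ x) • u q = u p ⬝ᵥ x := by
    intro p hp
    simp only [dotProduct_sum, dotProduct_smul, smul_eq_mul]
    rw [Finset.sum_eq_single_of_mem p hp fun q hq hqp => by simp [hu p hp q hq, Ne.symm hqp]]
    simp [hu p hp p hp]
  conv_lhs => rw [sum_dotProduct]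
  rw [sum_dotProduct]
  exact Finset.sum_congr rfl fun p hp => by rw [smul_dotProduct, smul_dotProduct, hcoeff p hp]

lemma Pop_transpose_apply (S : Finset (Fin n × (Fin d → ℝ))) (X : Matrix (Fin d) (Fin n) ℝ)
    (i : Fin n) :
    (Pop S X)ᵀ i = ∑ p ∈ S.filter (·.1 = i), (p.2 ⬝ᵥ Xᵀ i) • p.2 := by
  ext j
  simp only [Matrix.transpose_apply, Pop, Matrix.sum_apply, Matrix.of_apply, Finset.sum_apply,
    Finset.sum_filter, Pi.smul_apply, smul_eq_mul, dotProduct]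
  refine Finset.sum_congr rfl fun p _ => ?_
  rcases eq_or_ne p.1 i with rfl | h
  · simp [mul_comm]
  · simp [h, Ne.symm h]

lemma PerIndexOrthonormal.dotProduct_eq {S : Finset (Fin n × (Fin d → ℝ))}
    (hS : PerIndexOrthonormal S) (i : Fin n) :
    ∀ p ∈ S.filter (·.1 = i), ∀ q ∈ S.filter (·.1 = i), p.2 ⬝ᵥ q.2 = if p = q then 1 else 0 := by
  intro p hp q hq
  rw [Finset.mem_filter] at hp hq
  split_ifs with hpq
  · subst hpq
    exact hS.1 p hp.1
  · refine hS.2 p hp.1 q hq.1 (hp.2.trans hq.2.symm) fun h2 => hpq ?_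
    exact Prod.ext (hp.2.trans hq.2.symm) h2

lemma frobSq_Pop (S : Finset (Fin n × (Fin d → ℝ))) (hS : PerIndexOrthonormal S)
    (X : Matrix (Fin d) (Fin n) ℝ) :
    frobSq (Pop S X) = frobInner (Pop S X) X := by
  rw [← frobInner_self, frobInner_eq_sum_dotProduct_transpose,
    frobInner_eq_sum_dotProduct_transpose]
  refine Finset.sum_congr rfl fun i _ => ?_
  rw [Pop_transpose_apply]
  exact dotProduct_self_eq_of_orthonormal _ Prod.snd (hS.dotProduct_eq i) (Xᵀ i)

lemma frobSq_sub_smul_of_mul_self_eq {w : ℝ} (hw : w * w = w)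
    {M X : Matrix (Fin d) (Fin n) ℝ} (hM : frobSq M = frobInner M X)
    (A : Matrix (Fin d) (Fin n) ℝ) :
    frobSq (A - w • M) = frobSq A + w * frobInner M (X - 2 • A) := by
  have hexpand : frobSq (A - w • M) = frobSq A - 2 * w * frobInner M A + w * w * frobSq M := by
    simp only [frobSq, frobInner, Finset.mul_sum, ← Finset.sum_sub_distrib, ← Finset.sum_add_distrib]
    refine Finset.sum_congr rfl fun j _ => Finset.sum_congr rfl fun i _ => ?_
    simp only [Matrix.sub_apply, Matrix.smul_apply, smul_eq_mul]
    ring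
  have hlinear : frobInner M (X - 2 • A) = frobInner M X - 2 * frobInner M A := by
    simp only [frobInner, Finset.mul_sum, ← Finset.sum_sub_distrib]
    refine Finset.sum_congr rfl fun j _ => Finset.sum_congr rfl fun i _ => ?_
    simp only [Matrix.sub_apply, Matrix.smul_apply]
    ring
  rw [hexpand, hw, hM, hlinear]
  ring

lemma frobInner_sub_sub_two_smul (A B : Matrix (Fin d) (Fin n) ℝ) :
    frobInner (A - B) (A - B - 2 • A) = frobSq B - frobSq A := by
  simp only [frobInner, frobSq, ← Finset.sum_sub_distrib]
  refine Finset.sum_congr rfl fun j _ => Finset.sum_congr rfl fun i _ => ?_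
  simp only [Matrix.sub_apply, Matrix.smul_apply]
  ring

lemma integrable_mul_frobInner_Pop {Ω : Type*} [MeasurableSpace Ω] {μ : Measure Ω}
    {S : Ω → Finset (Fin n × (Fin d → ℝ))} {w : Ω → ℝ} {X : Matrix (Fin d) (Fin n) ℝ}
    (hint : ∀ j i, Integrable (fun ω => w ω * Pop (S ω) X j i) μ)
    (C : Matrix (Fin d) (Fin n) ℝ) :
    Integrable (fun ω => w ω * frobInner (Pop (S ω) X) C) μ := by
  simp only [frobInner, Finset.mul_sum, ← mul_assoc]
  exact integrable_finsetSum _ fun j _ =>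
    integrable_finsetSum _ fun i _ => (hint j i).mul_const (C j i)

lemma integral_mul_frobInner_Pop {Ω : Type*} [MeasurableSpace Ω] {μ : Measure Ω}
    {S : Ω → Finset (Fin n × (Fin d → ℝ))} {w : Ω → ℝ} {σ : ℝ} {X : Matrix (Fin d) (Fin n) ℝ}
    (hint : ∀ j i, Integrable (fun ω => w ω * Pop (S ω) X j i) μ)
    (hmean : ∀ j i, ∫ ω, w ω * Pop (S ω) X j i ∂μ = σ * X j i)
    (C : Matrix (Fin d) (Fin n) ℝ) :
    ∫ ω, w ω * frobInner (Pop (S ω) X) C ∂μ = σ * frobInner X C := by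
  calc ∫ ω, w ω * frobInner (Pop (S ω) X) C ∂μ
      = ∫ ω, ∑ j, ∑ i, w ω * Pop (S ω) X j i * C j i ∂μ := by
        simp only [frobInner, Finset.mul_sum, mul_assoc]
    _ = ∑ j, ∑ i, σ * X j i * C j i := by
        rw [integral_finsetSum _ fun j _ => integrable_finsetSum _ fun i _ =>
          (hint j i).mul_const (C j i)]
        refine Finset.sum_congr rfl fun j _ => ?_
        rw [integral_finsetSum _ fun i _ => (hint j i).mul_const (C j i)]
        exact Finset.sum_congr rfl fun i _ => by rw [integral_mul_const, hmean]
    _ = σ * frobInner X C := by simp only [frobInner, Finset.mul_sum, mul_assoc]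

theorem stmt10_general {Ω : Type*} [MeasurableSpace Ω] (μ : Measure Ω) [IsProbabilityMeasure μ]
    (S : Ω → Finset (Fin n × (Fin d → ℝ))) (w : Ω → ℝ)
    (hw01 : ∀ ω, w ω = 0 ∨ w ω = 1)
    (horth : ∀ ω, PerIndexOrthonormal (S ω))
    (σ : ℝ)
    (hint : ∀ (X : Matrix (Fin d) (Fin n) ℝ) (j : Fin d) (i : Fin n),
      Integrable (fun ω => w ω * Pop (S ω) X j i) μ)
    (hmean : ∀ (X : Matrix (Fin d) (Fin n) ℝ) (j : Fin d) (i : Fin n),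
      ∫ ω, w ω * Pop (S ω) X j i ∂μ = σ * X j i)
    (A B : Matrix (Fin d) (Fin n) ℝ) :
    ∫ ω, frobSq (A - w ω • Pop (S ω) (A - B)) ∂μ =
      (1 - σ) * frobSq A + σ * frobSq B := by
  have hpointwise : ∀ ω, frobSq (A - w ω • Pop (S ω) (A - B)) =
      frobSq A + w ω * frobInner (Pop (S ω) (A - B)) (A - B - 2 • A) := fun ω =>
    frobSq_sub_smul_of_mul_self_eq (by rcases hw01 ω with h | h <;> simp [h])
      (frobSq_Pop _ (horth ω) _) A
  simp only [hpointwise]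
  rw [integral_add (integrable_const _) (integrable_mul_frobInner_Pop (hint _) _), integral_const,
    probReal_univ, one_smul, integral_mul_frobInner_Pop (hint _) (hmean _),
    frobInner_sub_sub_two_smul]
  ring

/-- If `ω ∈ {0,1}` and `E[ω P(X)] = σ X` for all `X`, then
`E[‖A − ω P(A − B)‖_F²] = (1−σ)‖A‖_F² + σ‖B‖_F²`. -/
theorem stmt10 {Ω : Type*} [MeasurableSpace Ω] (μ : Measure Ω) [IsProbabilityMeasure μ]
    (S : Ω → Finset (Fin n × (Fin d → ℝ))) (w : Ω → ℝ)
    (hw01 : ∀ ω, w ω = 0 ∨ w ω = 1)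
    (horth : ∀ ω, PerIndexOrthonormal (S ω))
    (σ : ℝ) (hσ : 0 < σ) (hσ1 : σ < 1)
    (hint : ∀ (X : Matrix (Fin d) (Fin n) ℝ) (j : Fin d) (i : Fin n),
      Integrable (fun ω => w ω * Pop (S ω) X j i) μ)
    (hmean : ∀ (X : Matrix (Fin d) (Fin n) ℝ) (j : Fin d) (i : Fin n),
      ∫ ω, w ω * Pop (S ω) X j i ∂μ = σ * X j i)
    (A B : Matrix (Fin d) (Fin n) ℝ) :
    ∫ ω, frobSq (A - w ω • Pop (S ω) (A - B)) ∂μ =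
      (1 - σ) * frobSq A + σ * frobSq B :=
  stmt10_general μ S w hw01 horth σ hint hmean A B
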